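/- arXiv:1101.2815 — 2 statements merged into one kernel-verified Lean document; each statement's English description precedes it below -/
import Mathlib

section
/- Null-set transfer under the density hypothesis: Assume (HD). Let A ∈ F_T⊗B(Δ_n)⊗B(E^n) be a set such that for every (θ,e) ∈ Δ_n×E^n one has 1_A(·, θ, e)·γ_T(θ, e) = 0 P-almost surely. Then P({ω ∈ Ω : (ω, τ_1(ω),…,τ_n(ω), ζ_1(ω),…,ζ_n(ω)) ∈ A}) = 0. -/
/-!
At time `T`, (HD) says that on `F_T ⊗ B(Δ_n) ⊗ B(E^n)` the joint law of `(ω, τ(ω), ζ(ω))` is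
`γ_T · (P ⊗ dθ de)`: both measures give `B × C` the mass `E[1_B P[(τ, ζ) ∈ C | F_T]]`, so they
agree on the π-system of rectangles and hence on the whole product σ-algebra. By Tonelli, the
mass of `A` is `∫ (∫ 1_A γ_T dP) dθ de`, and every inner integral vanishes by assumption.
-/

open MeasureTheory Set

noncomputable section

namespace PaperBSDEJumps

variable {Ω : Type*}

/-- The predictable σ-algebra `𝒫(F)` on `ℝ × Ω`: the σ-algebra generated by the
left-continuous `F`-adapted real-valued processes. -/
def predSigma (F : ℝ → MeasurableSpace Ω) : MeasurableSpace (ℝ × Ω) :=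
  ⨆ X : {X : ℝ × Ω → ℝ //
      (∀ ω : Ω, ∀ t : ℝ, ContinuousWithinAt (fun s => X (s, ω)) (Set.Iic t) t) ∧
      ∀ t : ℝ, Measurable[F t] fun ω => X (t, ω)},
    MeasurableSpace.comap X.1 inferInstance

/-- The progressive σ-algebra `𝒫ℳ(F)` on `ℝ × Ω`: a set is progressively measurable iff for
every `s ≥ 0` its restriction to `[0,s] × Ω` is `B([0,s]) ⊗ F_s`-measurable. -/
def progSigma (F : ℝ → MeasurableSpace Ω) : MeasurableSpace (ℝ × Ω) :=
  ⨅ s : ℝ, MeasurableSpace.map (fun p : Set.Icc (0 : ℝ) s × Ω => ((p.1 : ℝ), p.2))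
    (MeasurableSpace.prod inferInstance (F s))

/-- `𝒫(F) ⊗ B(α)`-measurability for a parameterized process. -/
def PredParamMeas (F : ℝ → MeasurableSpace Ω) {α β : Type*} [mα : MeasurableSpace α]
    [MeasurableSpace β] (X : (ℝ × Ω) × α → β) : Prop :=
  Measurable[(predSigma F).prod mα] X

/-- `𝒫ℳ(F, α)`-measurability: for every `s`, the restriction of `X` to times in `[0,s]`
is `B([0,s]) ⊗ F_s ⊗ B(α)`-measurable. -/
def ProgParamMeas (F : ℝ → MeasurableSpace Ω) {α β : Type*} [mα : MeasurableSpace α]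
    [MeasurableSpace β] (X : (ℝ × Ω) × α → β) : Prop :=
  ∀ s : ℝ, Measurable[MeasurableSpace.prod
      (inferInstance : MeasurableSpace (Set.Icc (0 : ℝ) s))
      (MeasurableSpace.prod (F s) mα)]
    fun p : Set.Icc (0 : ℝ) s × Ω × α => X (((p.1 : ℝ), p.2.1), p.2.2)

/-- `G` is the progressive enlargement of the filtration `F` with the random times
`τ_1 ≤ … ≤ τ_n` and the marks `ζ_1, …, ζ_n`: the smallest right-continuous filtration
containing `F` such that each `τ_k` is a `G`-stopping time and each `ζ_k` is
`G_{τ_k}`-measurable. -/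
def IsProgEnlargement {Em : Type*} [MeasurableSpace Em]
    (F : ℝ → MeasurableSpace Ω) (n : ℕ) (τ : ℕ → Ω → ℝ) (ζ : ℕ → Ω → Em)
    (G : ℝ → MeasurableSpace Ω) : Prop :=
  Monotone G ∧ (∀ t, F t ≤ G t) ∧ (∀ t, G t = ⨅ s ∈ Set.Ioi t, G s) ∧
  (∀ k, 1 ≤ k → k ≤ n → ∀ t : ℝ, MeasurableSet[G t] {ω | τ k ω ≤ t}) ∧
  (∀ k, 1 ≤ k → k ≤ n → ∀ B : Set Em, MeasurableSet B →
    ∀ t : ℝ, MeasurableSet[G t] ({ω | ζ k ω ∈ B} ∩ {ω | τ k ω ≤ t})) ∧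
  ∀ G' : ℝ → MeasurableSpace Ω, Monotone G' → (∀ t, F t ≤ G' t) →
    (∀ t, G' t = ⨅ s ∈ Set.Ioi t, G' s) →
    (∀ k, 1 ≤ k → k ≤ n → ∀ t : ℝ, MeasurableSet[G' t] {ω | τ k ω ≤ t}) →
    (∀ k, 1 ≤ k → k ≤ n → ∀ B : Set Em, MeasurableSet B →
      ∀ t : ℝ, MeasurableSet[G' t] ({ω | ζ k ω ∈ B} ∩ {ω | τ k ω ≤ t})) →
    ∀ t, G t ≤ G' t

/-- The reference measure `de` on a Borel subset `E ⊆ ℝ^m`: the restriction of the Lebesgue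
measure to `E`, viewed as a measure on the subtype `↥E`. -/
def measE {mdim : ℕ} (E : Set (Fin mdim → ℝ)) : Measure ↥E :=
  (volume : Measure (Fin mdim → ℝ)).comap Subtype.val

/-- The measure `dθ_{k+1}…dθ_n de_{k+1}…de_n` on `ℝ^{n-k} × E^{n-k}`. -/
def prodFinMeas {mdim : ℕ} (E : Set (Fin mdim → ℝ)) (j : ℕ) :
    Measure ((Fin j → ℝ) × (Fin j → ↥E)) :=
  (volume : Measure (Fin j → ℝ)).prod (Measure.pi fun _ => measE E)

/-- Concatenation of a `k`-vector with an `(n-k)`-vector into an `n`-vector. -/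
def splice {α : Type*} {n k : ℕ} (θ : Fin k → α) (q : Fin (n - k) → α) : Fin n → α :=
  fun i => if h : (i : ℕ) < k then θ ⟨i, h⟩
    else q ⟨(i : ℕ) - k, by have := i.isLt; omega⟩

/-- The density hypothesis (HD): `γ` is a positive `𝒫(F) ⊗ B(Δ_n) ⊗ B(E^n)`-measurable map
such that `P[(τ_{(n)}, ζ_{(n)}) ∈ dθ de | F_t] = γ_t(θ, e) dθ de` for all `t ≥ 0`. -/
def DensityHypothesis {mΩ : MeasurableSpace Ω} {mdim : ℕ} {E : Set (Fin mdim → ℝ)}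
    (P : Measure Ω) (F : ℝ → MeasurableSpace Ω) {n : ℕ}
    (τ : ℕ → Ω → ℝ) (ζ : ℕ → Ω → ↥E)
    (γ : (ℝ × Ω) × ((Fin n → ℝ) × (Fin n → ↥E)) → ℝ) : Prop :=
  (∀ p, 0 < γ p) ∧
  Measurable[(predSigma F).prod inferInstance] γ ∧
  ∀ t : ℝ, 0 ≤ t → ∀ A : Set ((Fin n → ℝ) × (Fin n → ↥E)), MeasurableSet A →
    P[(fun ω => A.indicator (fun _ => (1 : ℝ))
        (fun i => τ ((i : ℕ) + 1) ω, fun i => ζ ((i : ℕ) + 1) ω)) | F t]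
      =ᵐ[P] fun ω => ∫ p in A, γ ((t, ω), p) ∂(prodFinMeas E n)

lemma MeasurableSpace.prod_mono_left {α β : Type*} {m₁ m₂ : MeasurableSpace α}
    (m : MeasurableSpace β) (h : m₁ ≤ m₂) : m₁.prod m ≤ m₂.prod m :=
  sup_le_sup (MeasurableSpace.comap_mono h) le_rfl

lemma measurable_prodMk_left_predSigma (F : ℝ → MeasurableSpace Ω) (t : ℝ) :
    Measurable[F t, predSigma F] fun ω => (t, ω) := by
  rw [measurable_iff_comap_le, predSigma, MeasurableSpace.comap_iSup]
  refine iSup_le fun X => ?_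
  rw [MeasurableSpace.comap_comp]
  exact measurable_iff_comap_le.mp (X.2.2 t)

lemma sigmaFinite_measE {mdim : ℕ} {E : Set (Fin mdim → ℝ)} (hE : MeasurableSet E) :
    SigmaFinite (measE E) := by
  have hemb : MeasurableEmbedding ((↑) : E → (Fin mdim → ℝ)) :=
    MeasurableEmbedding.subtype_coe hE
  refine ⟨⟨⟨fun k => Subtype.val ⁻¹' spanningSets (volume : Measure (Fin mdim → ℝ)) k,
    fun _ => trivial, fun k => ?_, ?_⟩⟩⟩
  · rw [measE, hemb.comap_apply]
    exact (measure_mono (image_preimage_subset _ _)).trans_lt (measure_spanningSets_lt_top _ k)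
  · rw [← preimage_iUnion, iUnion_spanningSets, preimage_univ]

section CondDensity

variable {β : Type*} {m mΩ : MeasurableSpace Ω} [MeasurableSpace β]
  {P : Measure Ω} {μ : Measure β} {X : Ω → β} {f : Ω × β → ℝ}

def HasCondDensity (m : MeasurableSpace Ω) (P : Measure[mΩ] Ω) (X : Ω → β) (μ : Measure β)
    (f : Ω × β → ℝ) : Prop :=
  ∀ C : Set β, MeasurableSet C →
    P[(X ⁻¹' C).indicator fun _ => (1 : ℝ) | m] =ᵐ[P] fun ω => ∫ p in C, f (ω, p) ∂μ

lemma setLIntegral_ofReal_prod_eq_zero [SFinite P] [SFinite μ] {A : Set (Ω × β)}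
    (hA : MeasurableSet A) (hf : Measurable f)
    (h : ∀ p, ∀ᵐ ω ∂P, A.indicator (fun _ => (1 : ℝ)) (ω, p) * f (ω, p) = 0) :
    ∫⁻ q in A, ENNReal.ofReal (f q) ∂(P.prod μ) = 0 := by
  have hslice (p : β) :
      (fun ω => A.indicator (fun q => ENNReal.ofReal (f q)) (ω, p)) =ᵐ[P] 0 := by
    filter_upwards [h p] with ω hω
    by_cases hmem : (ω, p) ∈ A <;> simp_all
  rw [← lintegral_indicator hA, lintegral_prod_symm' _ (hf.ennreal_ofReal.indicator hA)]
  exact (lintegral_congr fun p => (lintegral_congr_ae (hslice p)).trans lintegral_zero).trans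
    lintegral_zero

variable [IsFiniteMeasure P]

lemma HasCondDensity.ae_integrable (hm : m ≤ mΩ) (h : HasCondDensity m P X μ f) :
    ∀ᵐ ω ∂P, Integrable (fun p => f (ω, p)) μ := by
  have h_univ := h univ MeasurableSet.univ
  simp only [preimage_univ, indicator_univ, condExp_const hm, Measure.restrict_univ] at h_univ
  filter_upwards [h_univ] with ω hω
  by_contra hni
  rw [integral_undef hni] at hω
  exact one_ne_zero hω

lemma HasCondDensity.measureReal_inter_preimage (hm : m ≤ mΩ) (h : HasCondDensity m P X μ f)
    (hX : Measurable X) {B : Set Ω} (hB : MeasurableSet[m] B) {C : Set β}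
    (hC : MeasurableSet C) :
    P.real (B ∩ X ⁻¹' C) = ∫ ω in B, ∫ p in C, f (ω, p) ∂μ ∂P := by
  rw [← integral_congr_ae (ae_restrict_of_ae (h C hC)),
    setIntegral_condExp hm ((integrable_const 1).indicator (hX hC)) hB,
    setIntegral_indicator (hX hC), setIntegral_const, smul_eq_mul, mul_one, inter_comm]

variable [SFinite μ]

lemma HasCondDensity.map_prodMk_apply_prod (hm : m ≤ mΩ) (h : HasCondDensity m P X μ f)
    (hX : Measurable X) (hf : Measurable f) (hf₀ : ∀ q, 0 ≤ f q)
    {B : Set Ω} (hB : MeasurableSet[m] B) {C : Set β} (hC : MeasurableSet C) :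
    P.map (fun ω => (ω, X ω)) (B ×ˢ C)
      = (P.prod μ).withDensity (fun q => ENNReal.ofReal (f q)) (B ×ˢ C) := by
  have hBC : MeasurableSet (B ×ˢ C) := (hm B hB).prod hC
  have hpair : Measurable fun ω => (ω, X ω) := measurable_id.prodMk hX
  rw [Measure.map_apply hpair hBC, withDensity_apply _ hBC,
    ← Measure.prod_restrict, lintegral_prod _ hf.ennreal_ofReal.aemeasurable]
  have h_inner : ∀ᵐ ω ∂P,
      ENNReal.ofReal (∫ p in C, f (ω, p) ∂μ) = ∫⁻ p in C, ENNReal.ofReal (f (ω, p)) ∂μ := by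
    filter_upwards [h.ae_integrable hm] with ω hω
    exact ofReal_integral_eq_lintegral_ofReal hω.restrict (.of_forall fun p => hf₀ _)
  have h_outer : Integrable (fun ω => ∫ p in C, f (ω, p) ∂μ) P :=
    integrable_condExp.congr (h C hC)
  calc P ((fun ω => (ω, X ω)) ⁻¹' B ×ˢ C)
      = ENNReal.ofReal (P.real (B ∩ X ⁻¹' C)) := (ofReal_measureReal (measure_ne_top _ _)).symm
    _ = ∫⁻ ω in B, ENNReal.ofReal (∫ p in C, f (ω, p) ∂μ) ∂P := by
        rw [h.measureReal_inter_preimage hm hX hB hC]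
        exact ofReal_integral_eq_lintegral_ofReal h_outer.restrict
          (.of_forall fun ω => integral_nonneg fun p => hf₀ _)
    _ = ∫⁻ ω in B, ∫⁻ p in C, ENNReal.ofReal (f (ω, p)) ∂μ ∂P :=
        lintegral_congr_ae (ae_restrict_of_ae h_inner)

lemma HasCondDensity.measure_prodMk_mem (hm : m ≤ mΩ) (h : HasCondDensity m P X μ f)
    (hX : Measurable X) (hf : Measurable f) (hf₀ : ∀ q, 0 ≤ f q)
    {A : Set (Ω × β)} (hA : MeasurableSet[m.prod ‹_›] A) :
    P {ω | (ω, X ω) ∈ A} = ∫⁻ q in A, ENNReal.ofReal (f q) ∂(P.prod μ) := by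
  have hle := MeasurableSpace.prod_mono_left ‹MeasurableSpace β› hm
  have hpair : Measurable fun ω => (ω, X ω) := measurable_id.prodMk hX
  have hrect {B : Set Ω} (hB : MeasurableSet[m] B) {C : Set β} (hC : MeasurableSet C) :=
    h.map_prodMk_apply_prod hm hX hf hf₀ hB hC
  have htrim : (P.map fun ω => (ω, X ω)).trim hle
      = ((P.prod μ).withDensity fun q => ENNReal.ofReal (f q)).trim hle := by
    have := Measure.isFiniteMeasure_map P fun ω => (ω, X ω)
    refine @ext_of_generate_finite _ (m.prod _) _ _ _ (@generateFrom_prod Ω β m _).symm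
      (@isPiSystem_prod Ω β m _) inferInstance ?_ ?_
    · rintro _ ⟨B, hB, C, hC, rfl⟩
      rw [trim_measurableSet_eq hle (hB.prod hC), trim_measurableSet_eq hle (hB.prod hC)]
      exact hrect hB hC
    · rw [trim_measurableSet_eq hle .univ, trim_measurableSet_eq hle .univ, ← univ_prod_univ]
      exact hrect .univ .univ
  rw [← withDensity_apply _ (hle A hA), ← trim_measurableSet_eq hle hA, ← htrim,
    trim_measurableSet_eq hle hA, Measure.map_apply hpair (hle A hA)]
  rfl

end CondDensity

theorem null_set_transfer_general
    {Ω : Type*} [mΩ : MeasurableSpace Ω] (P : Measure Ω) [IsProbabilityMeasure P]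
    {mdim : ℕ} {E : Set (Fin mdim → ℝ)} (hE : MeasurableSet E)
    (F : ℝ → MeasurableSpace Ω) (hFle : ∀ t, F t ≤ mΩ)
    (n : ℕ)
    (τ : ℕ → Ω → ℝ) (ζ : ℕ → Ω → ↥E)
    (hτm : ∀ k, Measurable (τ k))
    (hζm : ∀ k, Measurable (ζ k))
    (γ : (ℝ × Ω) × ((Fin n → ℝ) × (Fin n → ↥E)) → ℝ)
    (hγ : DensityHypothesis P F τ ζ γ)
    (T : ℝ) (hT : 0 < T)
    (A : Set (Ω × ((Fin n → ℝ) × (Fin n → ↥E))))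
    (hA : MeasurableSet[(F T).prod inferInstance] A)
    (hnull : ∀ (θ : Fin n → ℝ) (e : Fin n → ↥E),
      ∀ᵐ ω ∂P, A.indicator (fun _ => (1 : ℝ)) (ω, (θ, e)) * γ ((T, ω), (θ, e)) = 0) :
    P {ω | (ω, ((fun i : Fin n => τ ((i : ℕ) + 1) ω), (fun i : Fin n => ζ ((i : ℕ) + 1) ω))) ∈ A} = 0 := by
  obtain ⟨hγ_pos, hγ_meas, hγ_density⟩ := hγ
  have := sigmaFinite_measE hE
  have : SFinite (prodFinMeas E n) := by unfold prodFinMeas; infer_instance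
  have hX : Measurable fun ω => (fun i : Fin n => τ ((i : ℕ) + 1) ω,
      fun i : Fin n => ζ ((i : ℕ) + 1) ω) :=
    (measurable_pi_lambda _ fun _ => hτm _).prodMk (measurable_pi_lambda _ fun _ => hζm _)
  have hγT : Measurable fun q : Ω × ((Fin n → ℝ) × (Fin n → ↥E)) => γ ((T, q.1), q.2) :=
    hγ_meas.comp ((((measurable_prodMk_left_predSigma F T).mono (hFle T) le_rfl).comp
      measurable_fst).prodMk measurable_snd)
  have hcond : HasCondDensity (F T) P _ (prodFinMeas E n) fun q => γ ((T, q.1), q.2) :=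
    hγ_density T hT.le
  rw [hcond.measure_prodMk_mem (hFle T) hX hγT (fun q => (hγ_pos _).le) hA]
  exact setLIntegral_ofReal_prod_eq_zero (MeasurableSpace.prod_mono_left _ (hFle T) A hA) hγT
    fun p => hnull p.1 p.2

/-- **Null-set transfer under the density hypothesis**: assume (HD). If
`A ∈ F_T ⊗ B(Δ_n) ⊗ B(E^n)` is such that for every `(θ, e)`,
`1_A(·, θ, e) γ_T(θ, e) = 0` `P`-a.s., then
`P({ω : (ω, τ_{(n)}(ω), ζ_{(n)}(ω)) ∈ A}) = 0`. -/
theorem null_set_transfer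
    {Ω : Type*} [mΩ : MeasurableSpace Ω] (P : Measure Ω) [IsProbabilityMeasure P]
    {mdim : ℕ} {E : Set (Fin mdim → ℝ)} (hE : MeasurableSet E)
    (F : ℝ → MeasurableSpace Ω) (hFmono : Monotone F) (hFle : ∀ t, F t ≤ mΩ)
    (n : ℕ) (hn : 1 ≤ n)
    (τ : ℕ → Ω → ℝ) (ζ : ℕ → Ω → ↥E)
    (hτm : ∀ k, Measurable (τ k)) (hτ0 : ∀ k ω, 0 ≤ τ k ω)
    (hτmono : ∀ k, 1 ≤ k → k < n → ∀ ω, τ k ω ≤ τ (k + 1) ω)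
    (hζm : ∀ k, Measurable (ζ k))
    (γ : (ℝ × Ω) × ((Fin n → ℝ) × (Fin n → ↥E)) → ℝ)
    (hγ : DensityHypothesis P F τ ζ γ)
    (T : ℝ) (hT : 0 < T)
    (A : Set (Ω × ((Fin n → ℝ) × (Fin n → ↥E))))
    (hA : MeasurableSet[(F T).prod inferInstance] A)
    (hnull : ∀ (θ : Fin n → ℝ) (e : Fin n → ↥E),
      ∀ᵐ ω ∂P, A.indicator (fun _ => (1 : ℝ)) (ω, (θ, e)) * γ ((T, ω), (θ, e)) = 0) :
    P {ω | (ω, ((fun i : Fin n => τ ((i : ℕ) + 1) ω), (fun i : Fin n => ζ ((i : ℕ) + 1) ω))) ∈ A} = 0 :=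
  null_set_transfer_general (mΩ := mΩ) P hE F hFle n τ ζ hτm hζm γ hγ T hT A hA hnull

end PaperBSDEJumps
end
end

section
/- Properties of the exponential-utility generator (Step 2 of the proof of Theorem 5.1): Let α > 0, let C ⊂ ℝ be compact with 0 ∈ C, let σ, ϑ, β be uniformly bounded G-predictable coefficients with σ_t ≥ c_σ > 0 and β_t(e) > −1, and let λ be a nonnegative intensity with ∫_E λ_t(e) de uniformly bounded and λ_t = 0 for t > τ_n (hypothesis (HBI)). Define f̃(t,y,z,u) := inf_{π∈C} { (α²/2)|πσ_t|² y − απσ_t (z + ϑ_t y) + ∫_E [ e^{−απβ_t(e)} (u(e) + y) − y ] λ_t(e) de }. Then: (i) z ↦ f̃(t,y,z,u) is concave for all (t,y,u) (condition (HUQ1)); (ii) there exists a constant L such that |f̃(t, y, z, u(·)−y) − f̃(t, y', z, u(·)−y')| ≤ L|y−y'| for all t, z, u and y, y' ∈ ℝ (condition (HUQ2)); (iii) there exists a constant C' > 0 such that −C'(1 + |y| + |z| + ∫_E |u(e)| λ_t(e) de) ≤ f̃(t,y,z,u) ≤ C'(|y| + ∫_E |u(e)| λ_t(e) de) for all (t,y,z,u)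 (condition (HUQ3)); (iv) f̃(t,·,u) = f̃(t,·,0) for all u and all t ∈ (τ_n∧T, T] (condition (HUQ4)). -/
open MeasureTheory Set

noncomputable section

namespace PaperBSDEJumps

/-- The generator of the exponential-utility BSDE after the exponential change of variable:
`f̃(t, y, z, u) = inf_{π ∈ C} {(α²/2)|πσ_t|² y − απσ_t(z + ϑ_t y)
  + ∫_E [e^{−απβ_t(e)}(u(e) + y) − y] λ_t(e) de}`. -/
def tildeF {Ω : Type*} {mdim : ℕ} {E : Set (Fin mdim → ℝ)} (C : Set ℝ) (α : ℝ)
    (σ ϑ : ℝ × Ω → ℝ) (β lam : (ℝ × Ω) × ↥E → ℝ)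
    (t : ℝ) (ω : Ω) (y z : ℝ) (u : ↥E → ℝ) : ℝ :=
  ⨅ π : C, (α ^ 2 / 2 * ((π : ℝ) * σ (t, ω)) ^ 2 * y
    - α * (π : ℝ) * σ (t, ω) * (z + ϑ (t, ω) * y)
    + ∫ e, (Real.exp (-(α * (π : ℝ) * β ((t, ω), e))) * (u e + y) - y) * lam ((t, ω), e)
        ∂(measE E))

/-!
For each control `π ∈ C` the objective minimised in `f̃` is
`a_π y + b_π z + ∫ (φ_π (u + y) - y) λ` with `φ_π = e^{-απβ}`. Compactness of `C` and
boundedness of the coefficients bound `a_π`, `b_π` and `φ_π` uniformly, with `φ_π` bounded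
below by a positive constant. The objectives are therefore bounded below uniformly in `π`, so
concavity in `z` (each objective is affine in `z`), the Lipschitz estimate in `y` and the lower
growth bound pass to the infimum; the control `π = 0` gives the upper bound, and `u` drops out
wherever `λ` vanishes. Because `φ_π` is bounded below, the jump integrand is integrable only if
`|u| λ` is, so the junk value `0` of a non-integrable Bochner integral never breaks the
estimates.
-/

lemma neg_abs_mul_le_mul {a R : ℝ} (h : |a| ≤ R) (y : ℝ) : -(R * |y|) ≤ a * y := by
  have : |a * y| ≤ R * |y| := by rw [abs_mul]; gcongr
  linarith [neg_abs_le (a * y)]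

section Infimum

variable {ι : Type*} [Nonempty ι]

lemma concaveOn_ciInf {V : Type*} [AddCommMonoid V] [Module ℝ V] {s : Set V}
    {f : ι → V → ℝ} (hf : ∀ i, ConcaveOn ℝ s (f i))
    (hbdd : ∀ x ∈ s, BddBelow (range fun i => f i x)) :
    ConcaveOn ℝ s fun x => ⨅ i, f i x := by
  refine ⟨(hf (Classical.arbitrary ι)).1, fun x hx y hy p q hp hq hpq => le_ciInf fun i => ?_⟩
  calc p • (⨅ i, f i x) + q • ⨅ i, f i y ≤ p • f i x + q • f i y := by
        gcongr
        · exact ciInf_le (hbdd x hx) i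
        · exact ciInf_le (hbdd y hy) i
    _ ≤ f i (p • x + q • y) := (hf i).2 hx hy hp hq hpq

lemma abs_ciInf_sub_ciInf_le {f g : ι → ℝ} (hf : BddBelow (range f)) (hg : BddBelow (range g))
    {d : ℝ} (h : ∀ i, |f i - g i| ≤ d) : |(⨅ i, f i) - ⨅ i, g i| ≤ d := by
  refine abs_sub_le_iff.2
    ⟨sub_le_comm.1 (le_ciInf fun i => ?_), sub_le_comm.1 (le_ciInf fun i => ?_)⟩
  · linarith [ciInf_le hf i, (abs_le.1 (h i)).2]
  · linarith [ciInf_le hg i, (abs_le.1 (h i)).1]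

end Infimum

section JumpIntegral

variable {X : Type*} [MeasurableSpace X] {μ : Measure X} {φ u w : X → ℝ}

lemma integrable_of_integrable_mul {g : X → ℝ} {c : ℝ} (hc : 0 < c) (hφ : ∀ x, c ≤ φ x)
    (hg : AEStronglyMeasurable g μ) (h : Integrable (fun x => φ x * g x) μ) :
    Integrable g μ := by
  refine (h.norm.const_mul c⁻¹).mono' hg (ae_of_all _ fun x => ?_)
  rw [norm_mul, Real.norm_of_nonneg (hc.le.trans (hφ x)), le_inv_mul_iff₀ hc]
  exact mul_le_mul_of_nonneg_right (hφ x) (norm_nonneg _)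

lemma integrable_abs_mul_of_integrable_jump {c y : ℝ} (hc : 0 < c) (hφ : ∀ x, c ≤ φ x)
    (hw0 : ∀ x, 0 ≤ w x) (hw : Integrable w μ) (hu : AEStronglyMeasurable u μ)
    (h : Integrable (fun x => (φ x * (u x + y) - y) * w x) μ) :
    Integrable (fun x => |u x| * w x) μ := by
  have hφuy : Integrable (fun x => φ x * ((u x + y) * w x)) μ :=
    (h.add (hw.const_mul y)).congr <| ae_of_all _ fun x => by
      simp only [Pi.add_apply]; ring
  have huy : Integrable (fun x => (u x + y) * w x) μ :=
    integrable_of_integrable_mul hc hφ ((hu.add aestronglyMeasurable_const).mul hw.1) hφuy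
  have hu' : Integrable (fun x => u x * w x) μ :=
    (huy.sub (hw.const_mul y)).congr <| ae_of_all _ fun x => by
      simp only [Pi.sub_apply]; ring
  exact hu'.abs.congr (ae_of_all _ fun x => by simp only [abs_mul, abs_of_nonneg (hw0 x)])

lemma neg_le_integral_jump {c R y : ℝ} (hR : 0 ≤ R) (hc : 0 < c) (hφ : ∀ x, φ x ∈ Icc c R)
    (hw0 : ∀ x, 0 ≤ w x) (hw : Integrable w μ) (hu : AEStronglyMeasurable u μ) :
    -(R * ∫ x, |u x| * w x ∂μ + (R + 1) * |y| * ∫ x, w x ∂μ)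
      ≤ ∫ x, (φ x * (u x + y) - y) * w x ∂μ := by
  by_cases hI : Integrable (fun x => (φ x * (u x + y) - y) * w x) μ
  · have hJ := integrable_abs_mul_of_integrable_jump hc (fun x => (hφ x).1) hw0 hw hu hI
    have hpt : ∀ x, -(R * (|u x| * w x) + (R + 1) * |y| * w x)
        ≤ (φ x * (u x + y) - y) * w x := fun x => by
      have hφx : |φ x| ≤ R := abs_le.2 ⟨by linarith [(hφ x).1], (hφ x).2⟩
      have habs : |φ x * (u x + y) - y| ≤ R * |u x| + (R + 1) * |y| :=
        calc |φ x * (u x + y) - y| ≤ |φ x| * (|u x| + |y|) + |y| := by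
              refine (abs_sub _ _).trans ?_
              rw [abs_mul]
              gcongr
              exact abs_add_le _ _
          _ ≤ R * (|u x| + |y|) + |y| := by gcongr
          _ = R * |u x| + (R + 1) * |y| := by ring
      nlinarith [neg_abs_le (φ x * (u x + y) - y), hw0 x]
    calc -(R * ∫ x, |u x| * w x ∂μ + (R + 1) * |y| * ∫ x, w x ∂μ)
        = ∫ x, -(R * (|u x| * w x) + (R + 1) * |y| * w x) ∂μ := by
          rw [integral_neg, integral_add (hJ.const_mul R) (hw.const_mul _), integral_const_mul,
            integral_const_mul]
      _ ≤ _ := integral_mono ((hJ.const_mul R).add (hw.const_mul _)).neg hI hpt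
  · rw [integral_undef hI, neg_nonpos]
    have : 0 ≤ ∫ x, |u x| * w x ∂μ :=
      integral_nonneg fun x => mul_nonneg (abs_nonneg _) (hw0 x)
    have : 0 ≤ ∫ x, w x ∂μ := integral_nonneg hw0
    positivity

lemma abs_integral_sub_mul_sub_integral_sub_mul_le (f : X → ℝ) (hw0 : ∀ x, 0 ≤ w x)
    (hw : Integrable w μ) (y y' : ℝ) :
    |∫ x, (f x - y * w x) ∂μ - ∫ x, (f x - y' * w x) ∂μ| ≤ |y - y'| * ∫ x, w x ∂μ := by
  have hΛ : 0 ≤ ∫ x, w x ∂μ := integral_nonneg hw0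
  by_cases hf : Integrable f μ
  · rw [integral_sub hf (hw.const_mul y), integral_sub hf (hw.const_mul y'), integral_const_mul,
      integral_const_mul, sub_sub_sub_cancel_left, ← sub_mul, abs_mul, abs_of_nonneg hΛ,
      abs_sub_comm]
  · have hnot : ∀ v, ¬ Integrable (fun x => f x - v * w x) μ := fun v hv =>
      hf <| (hv.add (hw.const_mul v)).congr <| ae_of_all _ fun x => by
        simp only [Pi.add_apply]; ring
    rw [integral_undef (hnot y), integral_undef (hnot y'), sub_zero, abs_zero]
    exact mul_nonneg (abs_nonneg _) hΛ

lemma integral_mul_le_integral_abs_mul (hw0 : ∀ x, 0 ≤ w x) :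
    ∫ x, u x * w x ∂μ ≤ ∫ x, |u x| * w x ∂μ :=
  (le_abs_self _).trans <| abs_integral_le_integral_abs.trans_eq <|
    integral_congr_ae (ae_of_all _ fun x => by simp only [abs_mul, abs_of_nonneg (hw0 x)])

end JumpIntegral

section ControlGenerator

variable {ι X : Type*} [MeasurableSpace X]

def controlGenerator (a b : ι → ℝ) (φ : ι → X → ℝ) (w : X → ℝ) (μ : Measure X)
    (y z : ℝ) (u : X → ℝ) : ℝ :=
  ⨅ i, (a i * y + b i * z + ∫ x, (φ i x * (u x + y) - y) * w x ∂μ)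

structure GeneratorBounds (a b : ι → ℝ) (φ : ι → X → ℝ) (w : X → ℝ) (μ : Measure X)
    (c R : ℝ) : Prop where
  abs_a_le : ∀ i, |a i| ≤ R
  abs_b_le : ∀ i, |b i| ≤ R
  pos : 0 < c
  mem_Icc : ∀ i x, φ i x ∈ Icc c R
  nonneg : ∀ x, 0 ≤ w x
  integrable : Integrable w μ
  integral_le : ∫ x, w x ∂μ ≤ R

lemma controlGenerator_eq_of_weight_eq_zero (a b : ι → ℝ) (φ : ι → X → ℝ) {w : X → ℝ}
    (μ : Measure X) (hw : ∀ x, w x = 0) (y z : ℝ) (u v : X → ℝ) :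
    controlGenerator a b φ w μ y z u = controlGenerator a b φ w μ y z v := by
  simp [controlGenerator, hw]

namespace GeneratorBounds

variable {a b : ι → ℝ} {φ : ι → X → ℝ} {w : X → ℝ} {μ : Measure X} {c R : ℝ}
  {u : X → ℝ}

lemma neg_le_objective (h : GeneratorBounds a b φ w μ c R) (hu : AEStronglyMeasurable u μ)
    (i : ι) (y z : ℝ) :
    -((R + 1) ^ 2 * (|y| + |z| + ∫ x, |u x| * w x ∂μ))
      ≤ a i * y + b i * z + ∫ x, (φ i x * (u x + y) - y) * w x ∂μ := by
  have hR : 0 ≤ R := (abs_nonneg _).trans (h.abs_a_le i)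
  have hJ : 0 ≤ ∫ x, |u x| * w x ∂μ :=
    integral_nonneg fun x => mul_nonneg (abs_nonneg _) (h.nonneg x)
  have hjump := neg_le_integral_jump (y := y) hR h.pos (h.mem_Icc i) h.nonneg h.integrable hu
  have hΛ : (R + 1) * |y| * ∫ x, w x ∂μ ≤ (R + 1) * |y| * R := by
    gcongr
    exact h.integral_le
  have hconst : R * |y| + R * |z| + R * (∫ x, |u x| * w x ∂μ) + (R + 1) * |y| * R
      ≤ (R + 1) ^ 2 * (|y| + |z| + ∫ x, |u x| * w x ∂μ) :=
    calc _ ≤ R * |y| + R * |z| + R * (∫ x, |u x| * w x ∂μ) + (R + 1) * |y| * R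
          + (|y| + (R ^ 2 + R + 1) * (|z| + ∫ x, |u x| * w x ∂μ)) :=
          le_add_of_nonneg_right (by positivity)
      _ = _ := by ring
  linarith [neg_abs_mul_le_mul (h.abs_a_le i) y, neg_abs_mul_le_mul (h.abs_b_le i) z]

lemma bddBelow_objective [Nonempty ι] (h : GeneratorBounds a b φ w μ c R)
    (hu : AEStronglyMeasurable u μ) (y z : ℝ) :
    BddBelow (range fun i => a i * y + b i * z + ∫ x, (φ i x * (u x + y) - y) * w x ∂μ) :=
  ⟨_, forall_mem_range.2 fun i => h.neg_le_objective hu i y z⟩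

lemma concaveOn_controlGenerator [Nonempty ι] (h : GeneratorBounds a b φ w μ c R)
    (hu : AEStronglyMeasurable u μ) (y : ℝ) :
    ConcaveOn ℝ univ fun z => controlGenerator a b φ w μ y z u :=
  concaveOn_ciInf (fun i => ⟨convex_univ, fun z _ z' _ p q _ _ hpq => le_of_eq <| by
      simp only [smul_eq_mul]
      linear_combination (a i * y + ∫ x, (φ i x * (u x + y) - y) * w x ∂μ) * hpq⟩)
    fun z _ => h.bddBelow_objective hu y z

lemma abs_controlGenerator_sub_le [Nonempty ι] (h : GeneratorBounds a b φ w μ c R)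
    (hu : AEStronglyMeasurable u μ) (z y y' : ℝ) :
    |controlGenerator a b φ w μ y z (fun x => u x - y)
      - controlGenerator a b φ w μ y' z (fun x => u x - y')| ≤ 2 * R * |y - y'| := by
  refine abs_ciInf_sub_ciInf_le (h.bddBelow_objective (hu.sub aestronglyMeasurable_const) y z)
    (h.bddBelow_objective (hu.sub aestronglyMeasurable_const) y' z) fun i => ?_
  have hjump : ∀ v, ∫ x, (φ i x * u x - v) * w x ∂μ = ∫ x, (φ i x * u x * w x - v * w x) ∂μ :=
    fun v => integral_congr_ae (ae_of_all _ fun x => by ring)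
  simp only [Pi.sub_apply, sub_add_cancel, hjump]
  calc _ = |a i * (y - y') + ((∫ x, (φ i x * u x * w x - y * w x) ∂μ)
          - ∫ x, (φ i x * u x * w x - y' * w x) ∂μ)| := by ring_nf
    _ ≤ R * |y - y'| + |y - y'| * R := by
      refine (abs_add_le _ _).trans (add_le_add ?_ ?_)
      · rw [abs_mul]; gcongr; exact h.abs_a_le i
      · exact (abs_integral_sub_mul_sub_integral_sub_mul_le _ h.nonneg h.integrable y y').trans
          (by gcongr; exact h.integral_le)
    _ = 2 * R * |y - y'| := by ring

lemma controlGenerator_growth (h : GeneratorBounds a b φ w μ c R) (hu : AEStronglyMeasurable u μ)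
    {i₀ : ι} (ha : a i₀ = 0) (hb : b i₀ = 0) (hφ : ∀ x, φ i₀ x = 1) (y z : ℝ) :
    -(R + 1) ^ 2 * (1 + |y| + |z| + ∫ x, |u x| * w x ∂μ) ≤ controlGenerator a b φ w μ y z u ∧
      controlGenerator a b φ w μ y z u ≤ (R + 1) ^ 2 * (|y| + ∫ x, |u x| * w x ∂μ) := by
  have : Nonempty ι := ⟨i₀⟩
  have hR : 0 ≤ R := (abs_nonneg _).trans (h.abs_a_le i₀)
  have hJ : 0 ≤ ∫ x, |u x| * w x ∂μ :=
    integral_nonneg fun x => mul_nonneg (abs_nonneg _) (h.nonneg x)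
  have hupper : controlGenerator a b φ w μ y z u ≤ ∫ x, |u x| * w x ∂μ :=
    calc _ ≤ a i₀ * y + b i₀ * z + ∫ x, (φ i₀ x * (u x + y) - y) * w x ∂μ :=
          ciInf_le (h.bddBelow_objective hu y z) i₀
      _ = ∫ x, u x * w x ∂μ := by simp [ha, hb, hφ]
      _ ≤ _ := integral_mul_le_integral_abs_mul h.nonneg
  have hlower : -((R + 1) ^ 2 * (|y| + |z| + ∫ x, |u x| * w x ∂μ))
      ≤ controlGenerator a b φ w μ y z u := le_ciInf fun i => h.neg_le_objective hu i y z
  have hR1 : 1 ≤ (R + 1) ^ 2 := by nlinarith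
  constructor
  · nlinarith
  · nlinarith [abs_nonneg y]

end GeneratorBounds

end ControlGenerator

section ExponentialGenerator

variable {Ω : Type*} {mdim : ℕ} {E : Set (Fin mdim → ℝ)} {C : Set ℝ} {α : ℝ}
  {σ ϑ : ℝ × Ω → ℝ} {β lam : (ℝ × Ω) × ↥E → ℝ}

lemma tildeF_eq_controlGenerator (t : ℝ) (ω : Ω) :
    tildeF C α σ ϑ β lam t ω = controlGenerator
      (fun π : C => α ^ 2 / 2 * ((π : ℝ) * σ (t, ω)) ^ 2 - α * π * σ (t, ω) * ϑ (t, ω))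
      (fun π : C => -(α * π * σ (t, ω))) (fun π e => Real.exp (-(α * π * β ((t, ω), e))))
      (fun e => lam ((t, ω), e)) (measE E) := by
  ext y z u
  exact iInf_congr fun π => by ring

lemma exists_tildeF_eq_controlGenerator (hC : IsCompact C) (h0C : (0 : ℝ) ∈ C)
    (hbd : ∃ K : ℝ, ∀ (t : ℝ) (ω : Ω), |σ (t, ω)| ≤ K ∧ |ϑ (t, ω)| ≤ K ∧
      ∀ e : ↥E, |β ((t, ω), e)| ≤ K)
    (hlam0 : ∀ p, 0 ≤ lam p)
    (hlamint : ∀ (t : ℝ) (ω : Ω), Integrable (fun e => lam ((t, ω), e)) (measE E))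
    (hlambd : ∃ K : ℝ, ∀ (t : ℝ) (ω : Ω), ∫ e, lam ((t, ω), e) ∂(measE E) ≤ K) :
    ∃ c R : ℝ, 0 ≤ R ∧ ∀ (t : ℝ) (ω : Ω), ∃ (a b : C → ℝ) (φ : C → ↥E → ℝ),
      tildeF C α σ ϑ β lam t ω = controlGenerator a b φ (fun e => lam ((t, ω), e)) (measE E) ∧
      GeneratorBounds a b φ (fun e => lam ((t, ω), e)) (measE E) c R ∧
      a ⟨0, h0C⟩ = 0 ∧ b ⟨0, h0C⟩ = 0 ∧ ∀ e, φ ⟨0, h0C⟩ e = 1 := by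
  obtain ⟨K, hK⟩ := hbd
  obtain ⟨Λ, hΛ⟩ := hlambd
  have hbox : IsCompact (C ×ˢ Icc (-K) K) := hC.prod isCompact_Icc
  obtain ⟨A, hA⟩ := (hbox.prod isCompact_Icc).exists_bound_of_continuousOn
    (f := fun p : (ℝ × ℝ) × ℝ => α ^ 2 / 2 * (p.1.1 * p.1.2) ^ 2 - α * p.1.1 * p.1.2 * p.2)
    (by fun_prop)
  obtain ⟨B, hB⟩ := hbox.exists_bound_of_continuousOn (f := fun p : ℝ × ℝ => α * p.1 * p.2)
    (by fun_prop)
  have hαβ : ∀ t ω e, ∀ π : C, |α * π * β ((t, ω), e)| ≤ B := fun t ω e π =>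
    hB (π, _) ⟨π.2, abs_le.1 ((hK t ω).2.2 e)⟩
  set R := max (max A B) (max Λ (Real.exp B))
  refine ⟨Real.exp (-B), R, (Real.exp_pos B).le.trans (by simp [R]), fun t ω =>
    ⟨_, _, _, tildeF_eq_controlGenerator t ω, ⟨fun π => ?_, fun π => ?_, Real.exp_pos _,
      fun π e => ⟨?_, ?_⟩, fun e => hlam0 _, hlamint t ω, (hΛ t ω).trans (by simp [R])⟩,
      by simp, by simp, by simp⟩⟩
  · exact (hA ((π, _), _) ⟨⟨π.2, abs_le.1 (hK t ω).1⟩, abs_le.1 (hK t ω).2.1⟩).trans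
      (by simp [R])
  · rw [abs_neg]
    exact (hB (π, _) ⟨π.2, abs_le.1 (hK t ω).1⟩).trans (by simp [R])
  · exact Real.exp_le_exp.2 (neg_le_neg ((le_abs_self _).trans (hαβ t ω e π)))
  · exact (Real.exp_le_exp.2 ((neg_le_abs _).trans (hαβ t ω e π))).trans (by simp [R])

end ExponentialGenerator

theorem exponential_generator_properties_general
    {Ω : Type*} {mdim : ℕ} {E : Set (Fin mdim → ℝ)} (T : ℝ) (n : ℕ) (τ : ℕ → Ω → ℝ) (α : ℝ)
    (C : Set ℝ) (hC : IsCompact C) (h0C : (0 : ℝ) ∈ C)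
    (σ ϑ : ℝ × Ω → ℝ) (β lam : (ℝ × Ω) × ↥E → ℝ)
    -- uniform boundedness of the coefficients
    (hbd : ∃ K : ℝ, ∀ (t : ℝ) (ω : Ω), |σ (t, ω)| ≤ K ∧ |ϑ (t, ω)| ≤ K ∧
      ∀ e : ↥E, |β ((t, ω), e)| ≤ K)
    -- the intensity: nonnegative, integrable, with uniformly bounded total mass (HBI),
    -- vanishing after `τ_n`
    (hlam0 : ∀ p, 0 ≤ lam p)
    (hlamint : ∀ (t : ℝ) (ω : Ω), Integrable (fun e => lam ((t, ω), e)) (measE E))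
    (hlambd : ∃ K : ℝ, ∀ (t : ℝ) (ω : Ω), ∫ e, lam ((t, ω), e) ∂(measE E) ≤ K)
    (hlamτ : ∀ (t : ℝ) (ω : Ω) (e : ↥E), τ n ω < t → lam ((t, ω), e) = 0) :
    -- (HUQ1): concavity in `z`
    (∀ (t : ℝ) (ω : Ω) (y : ℝ) (u : ↥E → ℝ), Measurable u →
      ConcaveOn ℝ Set.univ (fun z => tildeF C α σ ϑ β lam t ω y z u)) ∧
    -- (HUQ2): uniform Lipschitz continuity in `y`
    (∃ L : ℝ, ∀ (t : ℝ) (ω : Ω) (z : ℝ) (u : ↥E → ℝ), Measurable u → ∀ y y' : ℝ,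
      |tildeF C α σ ϑ β lam t ω y z (fun e => u e - y)
        - tildeF C α σ ϑ β lam t ω y' z (fun e => u e - y')| ≤ L * |y - y'|) ∧
    -- (HUQ3): growth bounds
    (∃ C' : ℝ, 0 < C' ∧ ∀ (t : ℝ) (ω : Ω) (y z : ℝ) (u : ↥E → ℝ), Measurable u →
      -C' * (1 + |y| + |z| + ∫ e, |u e| * lam ((t, ω), e) ∂(measE E))
          ≤ tildeF C α σ ϑ β lam t ω y z u ∧
        tildeF C α σ ϑ β lam t ω y z u
          ≤ C' * (|y| + ∫ e, |u e| * lam ((t, ω), e) ∂(measE E))) ∧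
    -- (HUQ4): after `τ_n ∧ T` the generator does not depend on `u`
    (∀ (t : ℝ) (ω : Ω), min (τ n ω) T < t → t ≤ T →
      ∀ (y z : ℝ) (u : ↥E → ℝ), Measurable u →
        tildeF C α σ ϑ β lam t ω y z u = tildeF C α σ ϑ β lam t ω y z fun _ => 0) := by
  have : Nonempty C := ⟨⟨0, h0C⟩⟩
  obtain ⟨c, R, hR, hrep⟩ :=
    exists_tildeF_eq_controlGenerator (α := α) hC h0C hbd hlam0 hlamint hlambd
  refine ⟨fun t ω y u hu => ?_, ⟨2 * R, fun t ω z u hu y y' => ?_⟩,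
    ⟨(R + 1) ^ 2, by positivity, fun t ω y z u hu => ?_⟩, fun t ω hτ hT y z u _ => ?_⟩ <;>
    obtain ⟨a, b, φ, hF, hB, ha₀, hb₀, hφ₀⟩ := hrep t ω <;> rw [hF]
  · exact hB.concaveOn_controlGenerator hu.aestronglyMeasurable y
  · exact hB.abs_controlGenerator_sub_le hu.aestronglyMeasurable z y y'
  · exact hB.controlGenerator_growth hu.aestronglyMeasurable ha₀ hb₀ hφ₀ y z
  · have hτn : τ n ω < t := (min_lt_iff.1 hτ).resolve_right hT.not_gt
    exact controlGenerator_eq_of_weight_eq_zero a b φ _ (fun e => hlamτ t ω e hτn) y z u _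

/-- **Properties of the exponential-utility generator** (Step 2 of the proof of Theorem 5.1):
the generator `f̃` satisfies (HUQ1) (concavity in `z`), (HUQ2) (uniform Lipschitz estimate in
`y` along `u(·) − y`), (HUQ3) (linear-quadratic growth bounds), and (HUQ4)
(`f̃(t, ·, u) = f̃(t, ·, 0)` for `t ∈ (τ_n ∧ T, T]`). -/
theorem exponential_generator_properties
    {Ω : Type*} [mΩ : MeasurableSpace Ω] (P : Measure Ω) [IsProbabilityMeasure P]
    {mdim : ℕ} {E : Set (Fin mdim → ℝ)} (hE : MeasurableSet E)
    (T : ℝ) (hT : 0 < T)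
    (n : ℕ) (hn : 1 ≤ n) (τ : ℕ → Ω → ℝ) (hτ0 : ∀ k ω, 0 ≤ τ k ω)
    (α : ℝ) (hα : 0 < α)
    (C : Set ℝ) (hC : IsCompact C) (h0C : (0 : ℝ) ∈ C)
    (σ ϑ : ℝ × Ω → ℝ) (β lam : (ℝ × Ω) × ↥E → ℝ)
    -- uniform boundedness of the coefficients
    (hbd : ∃ K : ℝ, ∀ (t : ℝ) (ω : Ω), |σ (t, ω)| ≤ K ∧ |ϑ (t, ω)| ≤ K ∧
      ∀ e : ↥E, |β ((t, ω), e)| ≤ K)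
    (hσpos : ∃ cσ : ℝ, 0 < cσ ∧ ∀ (t : ℝ) (ω : Ω), cσ ≤ σ (t, ω))
    (hβ : ∀ p, -1 < β p)
    -- the intensity: nonnegative, integrable, with uniformly bounded total mass (HBI),
    -- vanishing after `τ_n`
    (hlam0 : ∀ p, 0 ≤ lam p)
    (hlamint : ∀ (t : ℝ) (ω : Ω), Integrable (fun e => lam ((t, ω), e)) (measE E))
    (hlambd : ∃ K : ℝ, ∀ (t : ℝ) (ω : Ω), ∫ e, lam ((t, ω), e) ∂(measE E) ≤ K)
    (hlamτ : ∀ (t : ℝ) (ω : Ω) (e : ↥E), τ n ω < t → lam ((t, ω), e) = 0) :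
    -- (HUQ1): concavity in `z`
    (∀ (t : ℝ) (ω : Ω) (y : ℝ) (u : ↥E → ℝ), Measurable u →
      ConcaveOn ℝ Set.univ (fun z => tildeF C α σ ϑ β lam t ω y z u)) ∧
    -- (HUQ2): uniform Lipschitz continuity in `y`
    (∃ L : ℝ, ∀ (t : ℝ) (ω : Ω) (z : ℝ) (u : ↥E → ℝ), Measurable u → ∀ y y' : ℝ,
      |tildeF C α σ ϑ β lam t ω y z (fun e => u e - y)
        - tildeF C α σ ϑ β lam t ω y' z (fun e => u e - y')| ≤ L * |y - y'|) ∧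
    -- (HUQ3): growth bounds
    (∃ C' : ℝ, 0 < C' ∧ ∀ (t : ℝ) (ω : Ω) (y z : ℝ) (u : ↥E → ℝ), Measurable u →
      -C' * (1 + |y| + |z| + ∫ e, |u e| * lam ((t, ω), e) ∂(measE E))
          ≤ tildeF C α σ ϑ β lam t ω y z u ∧
        tildeF C α σ ϑ β lam t ω y z u
          ≤ C' * (|y| + ∫ e, |u e| * lam ((t, ω), e) ∂(measE E))) ∧
    -- (HUQ4): after `τ_n ∧ T` the generator does not depend on `u`
    (∀ (t : ℝ) (ω : Ω), min (τ n ω) T < t → t ≤ T →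
      ∀ (y z : ℝ) (u : ↥E → ℝ), Measurable u →
        tildeF C α σ ϑ β lam t ω y z u = tildeF C α σ ϑ β lam t ω y z fun _ => 0) :=
  exponential_generator_properties_general T n τ α C hC h0C σ ϑ β lam hbd hlam0 hlamint hlambd hlamτ

end PaperBSDEJumps
end
end
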